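/- Restriction-congruent processes are strongly bisimilar: if P ≡_r Q (r-congruence, generated by the structural laws for restriction such as 0\L ≡ 0, END\L ≡ END, (α.P)\L ≡ α.(P\L) for α ∉ L∪L̄, (α.P)\L ≡ 0 for α ∈ L∪L̄, distribution over ;, +, *, merging of nested restrictions, and dropping vacuous restrictions), then P ∼ Q. -/
import Mathlib


/-- Running actions of XCCS over names `N`: input, output and the silent action. -/
inductive RAct (N : Type)
  | inp : N → RAct N
  | out : N → RAct N
  | tau : RAct N

/-- Complementary running actions. -/
def RAct.co {N : Type} : RAct N → RAct N → Prop := fun a b =>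
  (∃ n, a = .inp n ∧ b = .out n) ∨ (∃ n, a = .out n ∧ b = .inp n)

/-- XCCS actions: running actions together with the ending action `END`. -/
inductive XAct (N : Type)
  | run : RAct N → XAct N
  | END : XAct N

/-- XCCS process terms: the null process `0`, `END`, action prefix, sequential
composition, nondeterministic choice, parallel composition, iteration and
restriction. -/
inductive XP (N : Type)
  | zero : XP N
  | endp : XP N
  | pre : RAct N → XP N → XP N
  | seq : XP N → XP N → XP N
  | choice : XP N → XP N → XP N
  | par : XP N → XP N → XP N
  | star : XP N → XP N
  | res : Set N → XP N → XP N

/-- A running action is allowed through the restriction `\L` if it is `τ` or an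
input/output on a channel not in `L`. -/
def allowed {N : Type} (L : Set N) : RAct N → Prop
  | .inp a => a ∉ L
  | .out a => a ∉ L
  | .tau => True

mutual
/-- `XTm P` means `P →END ✓`: `P` can successfully finish. -/
inductive XTm {N : Type} : XP N → Prop
  | endp : XTm .endp
  | star {P : XP N} : XTm (.star P)
  | seq {P Q : XP N} : XTm P → XTm Q → XTm (.seq P Q)
  | choiceL {P Q : XP N} : XTm P → XTm (.choice P Q)
  | choiceR {P Q : XP N} : XTm Q → XTm (.choice P Q)
  | par {P Q : XP N} : XTm P → XTm Q → XTm (.par P Q)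
  | res {L : Set N} {P : XP N} : XTm P → XTm (.res L P)

/-- Transitions `P →α P'` of XCCS for running actions `α`. -/
inductive XTr {N : Type} : XP N → RAct N → XP N → Prop
  | pre {α : RAct N} {P : XP N} : XTr (.pre α P) α P
  | seqL {P P' Q : XP N} {α} : XTr P α P' → XTr (.seq P Q) α (.seq P' Q)
  | seqEnd {P Q Q' : XP N} {α} : XTm P → XTr Q α Q' → XTr (.seq P Q) α Q'
  | choiceL {P Q P' : XP N} {α} : XTr P α P' → XTr (.choice P Q) α P'
  | choiceR {P Q Q' : XP N} {α} : XTr Q α Q' → XTr (.choice P Q) α Q'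
  | parL {P Q P' : XP N} {α} : XTr P α P' → XTr (.par P Q) α (.par P' Q)
  | parR {P Q Q' : XP N} {α} : XTr Q α Q' → XTr (.par P Q) α (.par P Q')
  | sync {P Q P' Q' : XP N} {a b : RAct N} :
      RAct.co a b → XTr P a P' → XTr Q b Q' → XTr (.par P Q) (.tau) (.par P' Q')
  | star {P P' : XP N} {α} : XTr P α P' → XTr (.star P) α (.seq P' (.star P))
  | res {L : Set N} {P P' : XP N} {α} :
      XTr P α P' → allowed L α → XTr (.res L P) α (.res L P')
end

/-- `XRun P l` means `P ⇒l ✓`: `P` performs the sequence `l` (which necessarily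
ends with `END`) and successfully finishes. -/
inductive XRun {N : Type} : XP N → List (XAct N) → Prop
  | done {P : XP N} : XTm P → XRun P [.END]
  | cons {P P' : XP N} {α : RAct N} {l : List (XAct N)} :
      XTr P α P' → XRun P' l → XRun P (.run α :: l)

/-- The set of finite possible runs of an XCCS process. -/
def XRf {N : Type} (P : XP N) : Set (List (XAct N)) :=
  { l | XRun P l }

/-- The names of a running action. -/
def ractNames {N : Type} : RAct N → Set N
  | .inp a => {a}
  | .out a => {a}
  | .tau => ∅

/-- All names occurring in a process (in actions or in restriction sets). -/
def namesX {N : Type} : XP N → Set N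
  | .zero => ∅
  | .endp => ∅
  | .pre α P => ractNames α ∪ namesX P
  | .seq P Q => namesX P ∪ namesX Q
  | .choice P Q => namesX P ∪ namesX Q
  | .par P Q => namesX P ∪ namesX Q
  | .star P => namesX P
  | .res L P => L ∪ namesX P

/-- `n(P)`: the names occurring in `P` as part of input and output actions. -/
def actNames {N : Type} : XP N → Set N
  | .zero => ∅
  | .endp => ∅
  | .pre α P => ractNames α ∪ actNames P
  | .seq P Q => actNames P ∪ actNames Q
  | .choice P Q => actNames P ∪ actNames Q
  | .par P Q => actNames P ∪ actNames Q
  | .star P => actNames P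
  | .res _ P => actNames P

/-- Renaming of a running action. -/
def renR {N : Type} (f : N → N) : RAct N → RAct N
  | .inp a => .inp (f a)
  | .out a => .out (f a)
  | .tau => .tau

/-- Renaming of every occurrence of names in a process. -/
def renX {N : Type} (f : N → N) : XP N → XP N
  | .zero => .zero
  | .endp => .endp
  | .pre α P => .pre (renR f α) (renX f P)
  | .seq P Q => .seq (renX f P) (renX f Q)
  | .choice P Q => .choice (renX f P) (renX f Q)
  | .par P Q => .par (renX f P) (renX f Q)
  | .star P => .star (renX f P)
  | .res L P => .res (f '' L) (renX f P)

/-- Restriction congruence `≡_r`: the smallest congruence closed under alpha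
conversion and containing the structural laws for restriction. -/
inductive Rcong {N : Type} [DecidableEq N] : XP N → XP N → Prop
  | refl (P : XP N) : Rcong P P
  | symm {P Q} : Rcong P Q → Rcong Q P
  | trans {P Q R} : Rcong P Q → Rcong Q R → Rcong P R
  -- congruence rules
  | congPre {α P Q} : Rcong P Q → Rcong (.pre α P) (.pre α Q)
  | congSeqL {P Q R} : Rcong P Q → Rcong (.seq P R) (.seq Q R)
  | congSeqR {P Q R} : Rcong P Q → Rcong (.seq R P) (.seq R Q)
  | congChoiceL {P Q R} : Rcong P Q → Rcong (.choice P R) (.choice Q R)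
  | congChoiceR {P Q R} : Rcong P Q → Rcong (.choice R P) (.choice R Q)
  | congParL {P Q R} : Rcong P Q → Rcong (.par P R) (.par Q R)
  | congParR {P Q R} : Rcong P Q → Rcong (.par R P) (.par R Q)
  | congStar {P Q} : Rcong P Q → Rcong (.star P) (.star Q)
  | congRes {L P Q} : Rcong P Q → Rcong (.res L P) (.res L Q)
  -- alpha conversion: replace a restricted name by a fresh one
  | alpha {L : Set N} {P : XP N} {a b : N} :
      a ∈ L → b ∉ namesX (.res L P) →
      Rcong (.res L P)
        (.res (insert b (L \ {a})) (renX (fun x => if x = a then b else x) P))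
  -- structural laws for restriction
  | zeroRes {L} : Rcong (.res L .zero) .zero
  | endRes {L} : Rcong (.res L .endp) .endp
  | preResFree {L : Set N} {α : RAct N} {P} :
      (∀ n ∈ ractNames α, n ∉ L) → Rcong (.res L (.pre α P)) (.pre α (.res L P))
  | preResBlock {L : Set N} {α : RAct N} {P} :
      (∃ n ∈ ractNames α, n ∈ L) → Rcong (.res L (.pre α P)) .zero
  | seqRes {L P Q} : Rcong (.res L (.seq P Q)) (.seq (.res L P) (.res L Q))
  | choiceRes {L P Q} :
      Rcong (.res L (.choice P Q)) (.choice (.res L P) (.res L Q))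
  | parRes {L : Set N} {P Q} :
      (∀ n ∈ actNames P, n ∉ L) → Rcong (.par P (.res L Q)) (.res L (.par P Q))
  | starRes {L P} : Rcong (.res L (.star P)) (.star (.res L P))
  | resRes {L M : Set N} {P} : Rcong (.res L (.res M P)) (.res (L ∪ M) P)
  | resDrop {L : Set N} {P} : (∀ n ∈ actNames P, n ∉ L) → Rcong (.res L P) P

/-- A strong bisimulation on XCCS processes: transfer conditions for running
actions and agreement on `END`-termination. -/
def IsXBisim {N : Type} (Z : XP N → XP N → Prop) : Prop :=
  ∀ ⦃P Q : XP N⦄, Z P Q →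
    (∀ α P', XTr P α P' → ∃ Q', XTr Q α Q' ∧ Z P' Q') ∧
    (∀ α Q', XTr Q α Q' → ∃ P', XTr P α P' ∧ Z P' Q') ∧
    (XTm P ↔ XTm Q)

/-- Strong bisimilarity of XCCS processes. -/
def XBisimilar {N : Type} (P Q : XP N) : Prop :=
  ∃ Z, IsXBisim Z ∧ Z P Q


namespace XHelp
open XP

variable {N : Type}

theorem allowed_iff {L : Set N} {α : RAct N} :
    allowed L α ↔ ∀ n ∈ ractNames α, n ∉ L := by
  cases α <;> simp [allowed, ractNames]

theorem allowed_union {L M : Set N} {α : RAct N} :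
    allowed (L ∪ M) α ↔ allowed L α ∧ allowed M α := by
  cases α <;> simp [allowed]

theorem co_names {a b : RAct N} (h : RAct.co a b) : ractNames a = ractNames b := by
  rcases h with ⟨n, rfl, rfl⟩ | ⟨n, rfl, rfl⟩ <;> rfl

theorem co_ren {f : N → N} {a b : RAct N} (h : RAct.co a b) :
    RAct.co (renR f a) (renR f b) := by
  rcases h with ⟨n, rfl, rfl⟩ | ⟨n, rfl, rfl⟩
  · exact Or.inl ⟨f n, rfl, rfl⟩
  · exact Or.inr ⟨f n, rfl, rfl⟩

theorem act_sub_names : ∀ P : XP N, actNames P ⊆ namesX P := by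
  intro P
  induction P with
  | zero => simp [actNames, namesX]
  | endp => simp [actNames, namesX]
  | pre α P ih => exact Set.union_subset_union_right _ ih
  | seq P Q ihP ihQ => exact Set.union_subset_union ihP ihQ
  | choice P Q ihP ihQ => exact Set.union_subset_union ihP ihQ
  | par P Q ihP ihQ => exact Set.union_subset_union ihP ihQ
  | star P ih => exact ih
  | res L P ih => exact ih.trans (Set.subset_union_right)

theorem tr_sub {P : XP N} {α : RAct N} {P' : XP N} (h : XTr P α P') :
    ractNames α ⊆ actNames P ∧ actNames P' ⊆ actNames P ∧ namesX P' ⊆ namesX P := by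
  induction P generalizing α P' with
  | zero => cases h
  | endp => cases h
  | pre β P ih =>
      cases h
      exact ⟨Set.subset_union_left, Set.subset_union_right, Set.subset_union_right⟩
  | seq P Q ihP ihQ =>
      cases h with
      | seqL hP =>
          obtain ⟨h1, h2, h3⟩ := ihP hP
          exact ⟨h1.trans Set.subset_union_left,
            Set.union_subset_union_left _ h2, Set.union_subset_union_left _ h3⟩
      | seqEnd _ hQ =>
          obtain ⟨h1, h2, h3⟩ := ihQ hQ
          exact ⟨h1.trans Set.subset_union_right,
            h2.trans Set.subset_union_right, h3.trans Set.subset_union_right⟩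
  | choice P Q ihP ihQ =>
      cases h with
      | choiceL hP =>
          obtain ⟨h1, h2, h3⟩ := ihP hP
          exact ⟨h1.trans Set.subset_union_left,
            h2.trans Set.subset_union_left, h3.trans Set.subset_union_left⟩
      | choiceR hQ =>
          obtain ⟨h1, h2, h3⟩ := ihQ hQ
          exact ⟨h1.trans Set.subset_union_right,
            h2.trans Set.subset_union_right, h3.trans Set.subset_union_right⟩
  | par P Q ihP ihQ =>
      cases h with
      | parL hP =>
          obtain ⟨h1, h2, h3⟩ := ihP hP
          exact ⟨h1.trans Set.subset_union_left,
            Set.union_subset_union_left _ h2, Set.union_subset_union_left _ h3⟩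
      | parR hQ =>
          obtain ⟨h1, h2, h3⟩ := ihQ hQ
          exact ⟨h1.trans Set.subset_union_right,
            Set.union_subset_union_right _ h2, Set.union_subset_union_right _ h3⟩
      | sync hco hP hQ =>
          obtain ⟨_, h2, h3⟩ := ihP hP
          obtain ⟨_, h2', h3'⟩ := ihQ hQ
          exact ⟨by simp [ractNames], Set.union_subset_union h2 h2',
            Set.union_subset_union h3 h3'⟩
  | star P ih =>
      cases h with
      | star hP =>
          obtain ⟨h1, h2, h3⟩ := ih hP
          exact ⟨h1, Set.union_subset h2 le_rfl, Set.union_subset h3 le_rfl⟩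
  | res L P ih =>
      cases h with
      | res hP _ =>
          obtain ⟨h1, h2, h3⟩ := ih hP
          exact ⟨h1, h2, Set.union_subset_union_right _ h3⟩

theorem renR_names {f : N → N} (α : RAct N) :
    ractNames (renR f α) = f '' ractNames α := by
  cases α <;> simp [renR, ractNames]

theorem renR_id {f : N → N} {α : RAct N} (h : ∀ n ∈ ractNames α, f n = n) :
    renR f α = α := by
  cases α with
  | inp a => simp [renR, h a (by simp [ractNames])]
  | out a => simp [renR, h a (by simp [ractNames])]
  | tau => rfl

theorem renTm_of {f : N → N} {P : XP N} (h : XTm P) : XTm (renX f P) := by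
  induction P with
  | zero => cases h
  | endp => exact XTm.endp
  | pre => cases h
  | seq P Q ihP ihQ => cases h with | seq hP hQ => exact XTm.seq (ihP hP) (ihQ hQ)
  | choice P Q ihP ihQ =>
      cases h with
      | choiceL hP => exact XTm.choiceL (ihP hP)
      | choiceR hQ => exact XTm.choiceR (ihQ hQ)
  | par P Q ihP ihQ => cases h with | par hP hQ => exact XTm.par (ihP hP) (ihQ hQ)
  | star => exact XTm.star
  | res L P ih => cases h with | res hP => exact XTm.res (ih hP)

theorem renTm_inv {f : N → N} {P : XP N} (h : XTm (renX f P)) : XTm P := by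
  induction P with
  | zero => simp only [renX] at h; cases h
  | endp => exact XTm.endp
  | pre => simp only [renX] at h; cases h
  | seq P Q ihP ihQ =>
      simp only [renX] at h
      cases h with | seq hP hQ => exact XTm.seq (ihP hP) (ihQ hQ)
  | choice P Q ihP ihQ =>
      simp only [renX] at h
      cases h with
      | choiceL hP => exact XTm.choiceL (ihP hP)
      | choiceR hQ => exact XTm.choiceR (ihQ hQ)
  | par P Q ihP ihQ =>
      simp only [renX] at h
      cases h with | par hP hQ => exact XTm.par (ihP hP) (ihQ hQ)
  | star => exact XTm.star
  | res L P ih =>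
      simp only [renX] at h
      cases h with | res hP => exact XTm.res (ih hP)

theorem renTr {f : N → N} {P : XP N} {α : RAct N} {P' : XP N}
    (hinj : Set.InjOn f (namesX P)) (h : XTr P α P') :
    XTr (renX f P) (renR f α) (renX f P') := by
  induction P generalizing α P' with
  | zero => cases h
  | endp => cases h
  | pre β P ih => cases h; exact XTr.pre
  | seq P Q ihP ihQ =>
      cases h with
      | seqL hP =>
          exact XTr.seqL (ihP (hinj.mono Set.subset_union_left) hP)
      | seqEnd hm hQ =>
          exact XTr.seqEnd (renTm_of hm) (ihQ (hinj.mono Set.subset_union_right) hQ)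
  | choice P Q ihP ihQ =>
      cases h with
      | choiceL hP => exact XTr.choiceL (ihP (hinj.mono Set.subset_union_left) hP)
      | choiceR hQ => exact XTr.choiceR (ihQ (hinj.mono Set.subset_union_right) hQ)
  | par P Q ihP ihQ =>
      cases h with
      | parL hP => exact XTr.parL (ihP (hinj.mono Set.subset_union_left) hP)
      | parR hQ => exact XTr.parR (ihQ (hinj.mono Set.subset_union_right) hQ)
      | sync hco hP hQ =>
          exact XTr.sync (co_ren hco) (ihP (hinj.mono Set.subset_union_left) hP)
            (ihQ (hinj.mono Set.subset_union_right) hQ)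
  | star P ih =>
      cases h with
      | star hP => exact XTr.star (ih hinj hP)
  | res L P ih =>
      cases h with
      | res hP hal =>
          refine XTr.res (ih (hinj.mono Set.subset_union_right) hP) ?_
          rw [allowed_iff]
          intro n hn hmem
          rw [renR_names] at hn
          obtain ⟨x, hx, rfl⟩ := hn
          obtain ⟨y, hy, hfy⟩ := hmem
          have hxn : x ∈ namesX (XP.res L P) :=
            Set.subset_union_right ((act_sub_names P) ((tr_sub hP).1 hx))
          have hyn : y ∈ namesX (XP.res L P) := Set.subset_union_left hy
          have : y = x := hinj hyn hxn hfy
          exact (allowed_iff.mp hal) x hx (this ▸ hy)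

theorem renTrInv {f : N → N} {P : XP N} {β : RAct N} {Q : XP N}
    (hinj : Set.InjOn f (namesX P)) (h : XTr (renX f P) β Q) :
    ∃ α P', β = renR f α ∧ Q = renX f P' ∧ XTr P α P' := by
  induction P generalizing β Q with
  | zero => simp only [renX] at h; cases h
  | endp => simp only [renX] at h; cases h
  | pre γ P ih =>
      simp only [renX] at h
      cases h
      exact ⟨γ, P, rfl, rfl, XTr.pre⟩
  | seq P Q ihP ihQ =>
      simp only [renX] at h
      cases h with
      | seqL hP =>
          obtain ⟨α, P', rfl, rfl, hP'⟩ := ihP (hinj.mono Set.subset_union_left) hP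
          exact ⟨α, .seq P' Q, rfl, rfl, XTr.seqL hP'⟩
      | seqEnd hm hQ =>
          obtain ⟨α, Q', rfl, rfl, hQ'⟩ := ihQ (hinj.mono Set.subset_union_right) hQ
          exact ⟨α, Q', rfl, rfl, XTr.seqEnd (renTm_inv hm) hQ'⟩
  | choice P Q ihP ihQ =>
      simp only [renX] at h
      cases h with
      | choiceL hP =>
          obtain ⟨α, P', rfl, rfl, hP'⟩ := ihP (hinj.mono Set.subset_union_left) hP
          exact ⟨α, P', rfl, rfl, XTr.choiceL hP'⟩
      | choiceR hQ =>
          obtain ⟨α, Q', rfl, rfl, hQ'⟩ := ihQ (hinj.mono Set.subset_union_right) hQ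
          exact ⟨α, Q', rfl, rfl, XTr.choiceR hQ'⟩
  | par P Q ihP ihQ =>
      simp only [renX] at h
      cases h with
      | parL hP =>
          obtain ⟨α, P', rfl, rfl, hP'⟩ := ihP (hinj.mono Set.subset_union_left) hP
          exact ⟨α, .par P' Q, rfl, rfl, XTr.parL hP'⟩
      | parR hQ =>
          obtain ⟨α, Q', rfl, rfl, hQ'⟩ := ihQ (hinj.mono Set.subset_union_right) hQ
          exact ⟨α, .par P Q', rfl, rfl, XTr.parR hQ'⟩
      | sync hco hP hQ =>
          obtain ⟨a, P', ha, rfl, hP'⟩ := ihP (hinj.mono Set.subset_union_left) hP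
          obtain ⟨b, Q', hb, rfl, hQ'⟩ := ihQ (hinj.mono Set.subset_union_right) hQ
          subst ha; subst hb
          have hco' : RAct.co a b := by
            rcases hco with ⟨n, h1, h2⟩ | ⟨n, h1, h2⟩
            · obtain ⟨x, rfl⟩ : ∃ x, a = .inp x := by
                cases a <;> simp_all [renR]
              obtain ⟨y, rfl⟩ : ∃ y, b = .out y := by
                cases b <;> simp_all [renR]
              simp only [renR, RAct.inp.injEq, RAct.out.injEq] at h1 h2
              have hx : x ∈ namesX (XP.par P Q) :=
                Set.subset_union_left ((act_sub_names P) ((tr_sub hP').1 (by simp [ractNames])))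
              have hy : y ∈ namesX (XP.par P Q) :=
                Set.subset_union_right ((act_sub_names Q) ((tr_sub hQ').1 (by simp [ractNames])))
              have : x = y := hinj hx hy (h1.trans h2.symm)
              exact Or.inl ⟨x, rfl, by rw [this]⟩
            · obtain ⟨x, rfl⟩ : ∃ x, a = .out x := by
                cases a <;> simp_all [renR]
              obtain ⟨y, rfl⟩ : ∃ y, b = .inp y := by
                cases b <;> simp_all [renR]
              simp only [renR, RAct.inp.injEq, RAct.out.injEq] at h1 h2
              have hx : x ∈ namesX (XP.par P Q) :=
                Set.subset_union_left ((act_sub_names P) ((tr_sub hP').1 (by simp [ractNames])))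
              have hy : y ∈ namesX (XP.par P Q) :=
                Set.subset_union_right ((act_sub_names Q) ((tr_sub hQ').1 (by simp [ractNames])))
              have : x = y := hinj hx hy (h1.trans h2.symm)
              exact Or.inr ⟨x, rfl, by rw [this]⟩
          exact ⟨.tau, .par P' Q', rfl, rfl, XTr.sync hco' hP' hQ'⟩
  | star P ih =>
      simp only [renX] at h
      cases h with
      | star hP =>
          obtain ⟨α, P', rfl, rfl, hP'⟩ := ih hinj hP
          exact ⟨α, .seq P' (.star P), rfl, rfl, XTr.star hP'⟩
  | res L P ih =>
      simp only [renX] at h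
      cases h with
      | res hP hal =>
          obtain ⟨α, P', rfl, rfl, hP'⟩ := ih (hinj.mono Set.subset_union_right) hP
          refine ⟨α, .res L P', rfl, rfl, XTr.res hP' ?_⟩
          rw [allowed_iff]
          intro n hn hmem
          exact (allowed_iff.mp hal) (f n) (by rw [renR_names]; exact ⟨n, hn, rfl⟩)
            ⟨n, hmem, rfl⟩

theorem rcong_main {N : Type} [DecidableEq N] {P Q : XP N} (h : Rcong P Q) :
    (∀ α P', XTr P α P' → ∃ Q', XTr Q α Q' ∧ Rcong P' Q') ∧
    (∀ α Q', XTr Q α Q' → ∃ P', XTr P α P' ∧ Rcong P' Q') ∧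
    (XTm P ↔ XTm Q) := by
  induction h with
  | refl P =>
      exact ⟨fun α P' t => ⟨P', t, .refl _⟩, fun α Q' t => ⟨Q', t, .refl _⟩, Iff.rfl⟩
  | symm h ih =>
      obtain ⟨F, B, I⟩ := ih
      exact ⟨fun α X t => (B α X t).imp (fun P' ⟨t', r⟩ => ⟨t', r.symm⟩),
        fun α X t => (F α X t).imp (fun Q' ⟨t', r⟩ => ⟨t', r.symm⟩), I.symm⟩
  | trans h1 h2 ih1 ih2 =>
      obtain ⟨F1, B1, I1⟩ := ih1
      obtain ⟨F2, B2, I2⟩ := ih2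
      refine ⟨?_, ?_, I1.trans I2⟩
      · intro α X t
        obtain ⟨Y, t1, r1⟩ := F1 α X t
        obtain ⟨Z, t2, r2⟩ := F2 α Y t1
        exact ⟨Z, t2, r1.trans r2⟩
      · intro α X t
        obtain ⟨Y, t2, r2⟩ := B2 α X t
        obtain ⟨Z, t1, r1⟩ := B1 α Y t2
        exact ⟨Z, t1, r1.trans r2⟩
  | @congPre α P Q h ih =>
      refine ⟨?_, ?_, ?_⟩
      · intro β X t; cases t; exact ⟨Q, XTr.pre, h⟩
      · intro β X t; cases t; exact ⟨P, XTr.pre, h⟩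
      · exact ⟨fun k => (by cases k), fun k => (by cases k)⟩
  | @congSeqL P Q R h ih =>
      obtain ⟨F, B, I⟩ := ih
      refine ⟨?_, ?_, ?_⟩
      · intro β X t
        cases t with
        | seqL tP =>
            obtain ⟨Q', tQ, r⟩ := F _ _ tP
            exact ⟨_, XTr.seqL tQ, Rcong.congSeqL r⟩
        | seqEnd tm tR => exact ⟨_, XTr.seqEnd (I.mp tm) tR, .refl _⟩
      · intro β X t
        cases t with
        | seqL tQ =>
            obtain ⟨P', tP, r⟩ := B _ _ tQ
            exact ⟨_, XTr.seqL tP, Rcong.congSeqL r⟩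
        | seqEnd tm tR => exact ⟨_, XTr.seqEnd (I.mpr tm) tR, .refl _⟩
      · constructor
        · intro k; cases k with | seq k1 k2 => exact XTm.seq (I.mp k1) k2
        · intro k; cases k with | seq k1 k2 => exact XTm.seq (I.mpr k1) k2
  | @congSeqR P Q R h ih =>
      obtain ⟨F, B, I⟩ := ih
      refine ⟨?_, ?_, ?_⟩
      · intro β X t
        cases t with
        | seqL tR => exact ⟨_, XTr.seqL tR, Rcong.congSeqR h⟩
        | seqEnd tm tP =>
            obtain ⟨Q', tQ, r⟩ := F _ _ tP
            exact ⟨_, XTr.seqEnd tm tQ, r⟩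
      · intro β X t
        cases t with
        | seqL tR => exact ⟨_, XTr.seqL tR, Rcong.congSeqR h⟩
        | seqEnd tm tQ =>
            obtain ⟨P', tP, r⟩ := B _ _ tQ
            exact ⟨_, XTr.seqEnd tm tP, r⟩
      · constructor
        · intro k; cases k with | seq k1 k2 => exact XTm.seq k1 (I.mp k2)
        · intro k; cases k with | seq k1 k2 => exact XTm.seq k1 (I.mpr k2)
  | @congChoiceL P Q R h ih =>
      obtain ⟨F, B, I⟩ := ih
      refine ⟨?_, ?_, ?_⟩
      · intro β X t
        cases t with
        | choiceL tP =>
            obtain ⟨Q', tQ, r⟩ := F _ _ tP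
            exact ⟨_, XTr.choiceL tQ, r⟩
        | choiceR tR => exact ⟨_, XTr.choiceR tR, .refl _⟩
      · intro β X t
        cases t with
        | choiceL tQ =>
            obtain ⟨P', tP, r⟩ := B _ _ tQ
            exact ⟨_, XTr.choiceL tP, r⟩
        | choiceR tR => exact ⟨_, XTr.choiceR tR, .refl _⟩
      · constructor
        · intro k
          cases k with
          | choiceL k1 => exact XTm.choiceL (I.mp k1)
          | choiceR k2 => exact XTm.choiceR k2
        · intro k
          cases k with
          | choiceL k1 => exact XTm.choiceL (I.mpr k1)
          | choiceR k2 => exact XTm.choiceR k2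
  | @congChoiceR P Q R h ih =>
      obtain ⟨F, B, I⟩ := ih
      refine ⟨?_, ?_, ?_⟩
      · intro β X t
        cases t with
        | choiceL tR => exact ⟨_, XTr.choiceL tR, .refl _⟩
        | choiceR tP =>
            obtain ⟨Q', tQ, r⟩ := F _ _ tP
            exact ⟨_, XTr.choiceR tQ, r⟩
      · intro β X t
        cases t with
        | choiceL tR => exact ⟨_, XTr.choiceL tR, .refl _⟩
        | choiceR tQ =>
            obtain ⟨P', tP, r⟩ := B _ _ tQ
            exact ⟨_, XTr.choiceR tP, r⟩
      · constructor
        · intro k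
          cases k with
          | choiceL k1 => exact XTm.choiceL k1
          | choiceR k2 => exact XTm.choiceR (I.mp k2)
        · intro k
          cases k with
          | choiceL k1 => exact XTm.choiceL k1
          | choiceR k2 => exact XTm.choiceR (I.mpr k2)
  | @congParL P Q R h ih =>
      obtain ⟨F, B, I⟩ := ih
      refine ⟨?_, ?_, ?_⟩
      · intro β X t
        cases t with
        | parL tP =>
            obtain ⟨Q', tQ, r⟩ := F _ _ tP
            exact ⟨_, XTr.parL tQ, Rcong.congParL r⟩
        | parR tR => exact ⟨_, XTr.parR tR, Rcong.congParL h⟩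
        | sync hco tP tR =>
            obtain ⟨Q', tQ, r⟩ := F _ _ tP
            exact ⟨_, XTr.sync hco tQ tR, Rcong.congParL r⟩
      · intro β X t
        cases t with
        | parL tQ =>
            obtain ⟨P', tP, r⟩ := B _ _ tQ
            exact ⟨_, XTr.parL tP, Rcong.congParL r⟩
        | parR tR => exact ⟨_, XTr.parR tR, Rcong.congParL h⟩
        | sync hco tQ tR =>
            obtain ⟨P', tP, r⟩ := B _ _ tQ
            exact ⟨_, XTr.sync hco tP tR, Rcong.congParL r⟩
      · constructor
        · intro k; cases k with | par k1 k2 => exact XTm.par (I.mp k1) k2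
        · intro k; cases k with | par k1 k2 => exact XTm.par (I.mpr k1) k2
  | @congParR P Q R h ih =>
      obtain ⟨F, B, I⟩ := ih
      refine ⟨?_, ?_, ?_⟩
      · intro β X t
        cases t with
        | parL tR => exact ⟨_, XTr.parL tR, Rcong.congParR h⟩
        | parR tP =>
            obtain ⟨Q', tQ, r⟩ := F _ _ tP
            exact ⟨_, XTr.parR tQ, Rcong.congParR r⟩
        | sync hco tR tP =>
            obtain ⟨Q', tQ, r⟩ := F _ _ tP
            exact ⟨_, XTr.sync hco tR tQ, Rcong.congParR r⟩
      · intro β X t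
        cases t with
        | parL tR => exact ⟨_, XTr.parL tR, Rcong.congParR h⟩
        | parR tQ =>
            obtain ⟨P', tP, r⟩ := B _ _ tQ
            exact ⟨_, XTr.parR tP, Rcong.congParR r⟩
        | sync hco tR tQ =>
            obtain ⟨P', tP, r⟩ := B _ _ tQ
            exact ⟨_, XTr.sync hco tR tP, Rcong.congParR r⟩
      · constructor
        · intro k; cases k with | par k1 k2 => exact XTm.par k1 (I.mp k2)
        · intro k; cases k with | par k1 k2 => exact XTm.par k1 (I.mpr k2)
  | @congStar P Q h ih =>
      obtain ⟨F, B, I⟩ := ih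
      refine ⟨?_, ?_, iff_of_true XTm.star XTm.star⟩
      · intro β X t
        cases t with
        | star tP =>
            obtain ⟨Q', tQ, r⟩ := F _ _ tP
            exact ⟨_, XTr.star tQ,
              (Rcong.congSeqL r).trans (Rcong.congSeqR (Rcong.congStar h))⟩
      · intro β X t
        cases t with
        | star tQ =>
            obtain ⟨P', tP, r⟩ := B _ _ tQ
            exact ⟨_, XTr.star tP,
              (Rcong.congSeqL r).trans (Rcong.congSeqR (Rcong.congStar h))⟩
  | @congRes L P Q h ih =>
      obtain ⟨F, B, I⟩ := ih
      refine ⟨?_, ?_, ?_⟩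
      · intro β X t
        cases t with
        | res tP hal =>
            obtain ⟨Q', tQ, r⟩ := F _ _ tP
            exact ⟨_, XTr.res tQ hal, Rcong.congRes r⟩
      · intro β X t
        cases t with
        | res tQ hal =>
            obtain ⟨P', tP, r⟩ := B _ _ tQ
            exact ⟨_, XTr.res tP hal, Rcong.congRes r⟩
      · constructor
        · intro k; cases k with | res k1 => exact XTm.res (I.mp k1)
        · intro k; cases k with | res k1 => exact XTm.res (I.mpr k1)
  | @alpha L P a b ha hb =>
      have hb' : b ∉ L ∧ b ∉ namesX P := by
        simpa [namesX, not_or] using hb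
      obtain ⟨hbL, hbP⟩ := hb'
      have hinj : Set.InjOn (fun x => if x = a then b else x) (namesX P) := by
        intro x hx y hy hxy
        simp only at hxy
        by_cases hxa : x = a
        · by_cases hya : y = a
          · rw [hxa, hya]
          · rw [if_pos hxa, if_neg hya] at hxy
            exact absurd (hxy ▸ hy) hbP
        · by_cases hya : y = a
          · rw [if_neg hxa, if_pos hya] at hxy
            exact absurd (hxy ▸ hx) hbP
          · rwa [if_neg hxa, if_neg hya] at hxy
      refine ⟨?_, ?_, ?_⟩
      · intro β X t
        cases t with
        | res tP hal =>
            have hβa : ∀ n ∈ ractNames β, n ≠ a := by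
              intro n hn e
              exact (allowed_iff.mp hal) n hn (e ▸ ha)
            have hβb : ∀ n ∈ ractNames β, n ≠ b := by
              intro n hn e
              exact hbP (e ▸ (act_sub_names P ((tr_sub tP).1 hn)))
            have hfβ : renR (fun x => if x = a then b else x) β = β :=
              renR_id (fun n hn => if_neg (hβa n hn))
            have tQ := renTr hinj tP
            rw [hfβ] at tQ
            refine ⟨_, XTr.res tQ ?_, ?_⟩
            · rw [allowed_iff]
              intro n hn hmem
              rcases hmem with hmem | hmem
              · exact hβb n hn hmem
              · exact (allowed_iff.mp hal) n hn hmem.1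
            · refine Rcong.alpha ha ?_
              simp only [namesX, Set.mem_union, not_or]
              exact ⟨hbL, fun k => hbP ((tr_sub tP).2.2 k)⟩
      · intro β X t
        cases t with
        | res tY hal' =>
            obtain ⟨α, P', rfl, rfl, tP⟩ := renTrInv hinj tY
            have hαa : ∀ n ∈ ractNames α, n ≠ a := by
              intro n hn e
              refine (allowed_iff.mp hal') b ?_ (Set.mem_insert _ _)
              rw [renR_names]
              exact ⟨n, hn, by simp [e]⟩
            have hfα : renR (fun x => if x = a then b else x) α = α :=
              renR_id (fun n hn => if_neg (hαa n hn))
            rw [hfα] at hal' ⊢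
            have halL : allowed L α := by
              rw [allowed_iff]
              intro n hn hmem
              exact (allowed_iff.mp hal') n hn (Set.mem_insert_of_mem _ ⟨hmem, hαa n hn⟩)
            refine ⟨_, XTr.res tP halL, ?_⟩
            refine Rcong.alpha ha ?_
            simp only [namesX, Set.mem_union, not_or]
            exact ⟨hbL, fun k => hbP ((tr_sub tP).2.2 k)⟩
      · constructor
        · intro k; cases k with | res kP => exact XTm.res (renTm_of kP)
        · intro k; cases k with | res kP => exact XTm.res (renTm_inv kP)
  | zeroRes =>
      refine ⟨?_, ?_, ?_⟩
      · intro β X t; cases t with | res tP _ => cases tP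
      · intro β X t; cases t
      · exact ⟨fun k => (by cases k with | res k0 => cases k0), fun k => (by cases k)⟩
  | endRes =>
      refine ⟨?_, ?_, iff_of_true (XTm.res XTm.endp) XTm.endp⟩
      · intro β X t; cases t with | res tP _ => cases tP
      · intro β X t; cases t
  | @preResFree L α P hα =>
      refine ⟨?_, ?_, ?_⟩
      · intro β X t
        cases t with | res tP hal => cases tP; exact ⟨_, XTr.pre, .refl _⟩
      · intro β X t
        cases t
        exact ⟨_, XTr.res XTr.pre (allowed_iff.mpr hα), .refl _⟩
      · exact ⟨fun k => (by cases k with | res k0 => cases k0), fun k => (by cases k)⟩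
  | @preResBlock L α P hα =>
      obtain ⟨n, hn, hnL⟩ := hα
      refine ⟨?_, ?_, ?_⟩
      · intro β X t
        cases t with | res tP hal => cases tP; exact absurd hnL ((allowed_iff.mp hal) n hn)
      · intro β X t; cases t
      · exact ⟨fun k => (by cases k with | res k0 => cases k0), fun k => (by cases k)⟩
  | @seqRes L P Q =>
      refine ⟨?_, ?_, ?_⟩
      · intro β X t
        cases t with
        | res t1 hal =>
            cases t1 with
            | seqL tP => exact ⟨_, XTr.seqL (XTr.res tP hal), Rcong.seqRes⟩
            | seqEnd tm tQ => exact ⟨_, XTr.seqEnd (XTm.res tm) (XTr.res tQ hal), .refl _⟩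
      · intro β X t
        cases t with
        | seqL t1 =>
            cases t1 with
            | res tP hal => exact ⟨_, XTr.res (XTr.seqL tP) hal, Rcong.seqRes⟩
        | seqEnd tm t1 =>
            cases tm with
            | res tmP =>
                cases t1 with
                | res tQ hal => exact ⟨_, XTr.res (XTr.seqEnd tmP tQ) hal, .refl _⟩
      · constructor
        · intro k
          cases k with
          | res k0 => cases k0 with | seq k1 k2 => exact XTm.seq (XTm.res k1) (XTm.res k2)
        · intro k
          cases k with
          | seq k1 k2 =>
              cases k1 with
              | res k1 =>
                  cases k2 with
                  | res k2 => exact XTm.res (XTm.seq k1 k2)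
  | @choiceRes L P Q =>
      refine ⟨?_, ?_, ?_⟩
      · intro β X t
        cases t with
        | res t1 hal =>
            cases t1 with
            | choiceL tP => exact ⟨_, XTr.choiceL (XTr.res tP hal), .refl _⟩
            | choiceR tQ => exact ⟨_, XTr.choiceR (XTr.res tQ hal), .refl _⟩
      · intro β X t
        cases t with
        | choiceL t1 =>
            cases t1 with
            | res tP hal => exact ⟨_, XTr.res (XTr.choiceL tP) hal, .refl _⟩
        | choiceR t1 =>
            cases t1 with
            | res tQ hal => exact ⟨_, XTr.res (XTr.choiceR tQ) hal, .refl _⟩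
      · constructor
        · intro k
          cases k with
          | res k0 =>
              cases k0 with
              | choiceL k1 => exact XTm.choiceL (XTm.res k1)
              | choiceR k2 => exact XTm.choiceR (XTm.res k2)
        · intro k
          cases k with
          | choiceL k1 => cases k1 with | res k1 => exact XTm.res (XTm.choiceL k1)
          | choiceR k2 => cases k2 with | res k2 => exact XTm.res (XTm.choiceR k2)
  | @parRes L P Q hd =>
      refine ⟨?_, ?_, ?_⟩
      · intro β X t
        cases t with
        | parL tP =>
            refine ⟨_, XTr.res (XTr.parL tP)
              (allowed_iff.mpr (fun n hn => hd n ((tr_sub tP).1 hn))), ?_⟩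
            exact Rcong.parRes (fun n hn => hd n ((tr_sub tP).2.1 hn))
        | parR t1 =>
            cases t1 with
            | res tQ hal => exact ⟨_, XTr.res (XTr.parR tQ) hal, Rcong.parRes hd⟩
        | sync hco tP t1 =>
            cases t1 with
            | res tQ hal =>
                exact ⟨_, XTr.res (XTr.sync hco tP tQ) trivial,
                  Rcong.parRes (fun n hn => hd n ((tr_sub tP).2.1 hn))⟩
      · intro β X t
        cases t with
        | res t1 hal =>
            cases t1 with
            | parL tP =>
                exact ⟨_, XTr.parL tP, Rcong.parRes (fun n hn => hd n ((tr_sub tP).2.1 hn))⟩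
            | parR tQ =>
                exact ⟨_, XTr.parR (XTr.res tQ hal), Rcong.parRes hd⟩
            | sync hco tP tQ =>
                refine ⟨_, XTr.sync hco tP (XTr.res tQ ?_),
                  Rcong.parRes (fun n hn => hd n ((tr_sub tP).2.1 hn))⟩
                refine allowed_iff.mpr (fun n hn => hd n ((tr_sub tP).1 ?_))
                rw [co_names hco]
                exact hn
      · constructor
        · intro k
          cases k with
          | par k1 k2 =>
              cases k2 with
              | res k2 => exact XTm.res (XTm.par k1 k2)
        · intro k
          cases k with
          | res k0 =>
              cases k0 with
              | par k1 k2 => exact XTm.par k1 (XTm.res k2)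
  | @starRes L P =>
      refine ⟨?_, ?_, iff_of_true (XTm.res XTm.star) XTm.star⟩
      · intro β X t
        cases t with
        | res t1 hal =>
            cases t1 with
            | star tP =>
                exact ⟨_, XTr.star (XTr.res tP hal),
                  Rcong.seqRes.trans (Rcong.congSeqR Rcong.starRes)⟩
      · intro β X t
        cases t with
        | star t1 =>
            cases t1 with
            | res tP hal =>
                exact ⟨_, XTr.res (XTr.star tP) hal,
                  Rcong.seqRes.trans (Rcong.congSeqR Rcong.starRes)⟩
  | @resRes L M P =>
      refine ⟨?_, ?_, ?_⟩
      · intro β X t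
        cases t with
        | res t1 hal1 =>
            cases t1 with
            | res tP hal2 =>
                exact ⟨_, XTr.res tP (allowed_union.mpr ⟨hal1, hal2⟩), Rcong.resRes⟩
      · intro β X t
        cases t with
        | res tP hal =>
            exact ⟨_, XTr.res (XTr.res tP (allowed_union.mp hal).2)
              (allowed_union.mp hal).1, Rcong.resRes⟩
      · constructor
        · intro k
          cases k with
          | res k0 => cases k0 with | res k1 => exact XTm.res k1
        · intro k
          cases k with
          | res k0 => exact XTm.res (XTm.res k0)
  | @resDrop L P hd =>
      refine ⟨?_, ?_, ?_⟩
      · intro β X t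
        cases t with
        | res tP hal =>
            exact ⟨_, tP, Rcong.resDrop (fun n hn => hd n ((tr_sub tP).2.1 hn))⟩
      · intro β X t
        exact ⟨_, XTr.res t (allowed_iff.mpr (fun n hn => hd n ((tr_sub t).1 hn))),
          Rcong.resDrop (fun n hn => hd n ((tr_sub t).2.1 hn))⟩
      · constructor
        · intro k; cases k with | res k0 => exact k0
        · intro k; exact XTm.res k

end XHelp

/-- Restriction-congruent XCCS processes are strongly bisimilar. -/
theorem rcong_bisimilar {N : Type} [DecidableEq N] (P Q : XP N)
    (h : Rcong P Q) : XBisimilar P Q :=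
  ⟨Rcong, fun _ _ hpq => XHelp.rcong_main hpq, h⟩
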